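/- Let X be a Hausdorff, second-countable topological space. Then X is CoPolish if and only if X is locally compact. -/

import Mathlib

/-!
If `X` carries the direct limit topology of an increasing sequence `K n`, then every point `x`
has a neighbourhood of the form `insert x (K n)`: otherwise, along a countable neighbourhood
basis at `x`, one picks points `y n ∉ insert x (K n)` converging to `x`. Each `K m` meets only
finitely many of them, so `range y` is closed, yet `x` is in its closure but not in it.
Hence compact `K n` make `X` (weakly) locally compact. Conversely, a compact exhaustion of a
locally compact, second-countable Hausdorff space consists of compact metrizable sets, and
since each point lies in the interior of some `K n`, the topology is the direct limit one.
-/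

open Set Filter Topology

/-- A topological space is CoPolish if it is the direct limit of a monotone sequence of
compact metrizable subspaces: there is a monotone sequence `K` of compact sets, each
metrizable in the subspace topology, covering `X`, such that a set is open iff its
intersection with each `K n` is open in the subspace topology of `K n`. -/
def CoPolish (X : Type*) [TopologicalSpace X] : Prop :=
  ∃ K : ℕ → Set X, Monotone K ∧ (∀ n, IsCompact (K n)) ∧
    (∀ n, TopologicalSpace.MetrizableSpace (K n)) ∧
    (⋃ n, K n) = Set.univ ∧
    ∀ U : Set X, IsOpen U ↔ ∀ n, IsOpen ((Subtype.val : K n → X) ⁻¹' U)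

theorem Topology.isCoherentWith_range_iff {X ι : Type*} [TopologicalSpace X] {K : ι → Set X} :
    IsCoherentWith (range K) ↔ ∀ U : Set X, IsOpen U ↔ ∀ i, IsOpen ((↑) ⁻¹' U : Set (K i)) := by
  refine ⟨fun h U ↦ by rw [h.isOpen_iff, forall_mem_range], fun h ↦ ⟨fun U hU ↦ ?_⟩⟩
  exact (h U).2 fun i ↦ hU _ (mem_range_self i)

namespace Topology.IsCoherentWith

variable {X : Type*} [TopologicalSpace X] {K : ℕ → Set X}

theorem isClosed_range_of_forall_notMem [T1Space X] (hcoh : IsCoherentWith (range K))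
    (hK : Monotone K) {y : ℕ → X} (hy : ∀ n, y n ∉ K n) : IsClosed (range y) := by
  rw [hcoh.isClosed_iff, forall_mem_range]
  intro m
  have hsub : range y ∩ K m ⊆ y '' Iio m := by
    rintro _ ⟨⟨n, rfl⟩, hn⟩
    exact ⟨n, lt_of_not_ge fun hmn ↦ hy n (hK hmn hn), rfl⟩
  have hfin : ((↑) ⁻¹' (y '' Iio m) : Set (K m)).Finite :=
    ((finite_Iio m).image y).preimage Subtype.val_injective.injOn
  exact (hfin.subset fun z hz ↦ hsub ⟨hz, z.2⟩).isClosed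

theorem exists_insert_mem_nhds [T1Space X] [FirstCountableTopology X]
    (hcoh : IsCoherentWith (range K)) (hK : Monotone K) (x : X) :
    ∃ n, insert x (K n) ∈ 𝓝 x := by
  by_contra! h
  obtain ⟨U, hU⟩ := (𝓝 x).exists_antitone_basis
  have hescape : ∀ n, ∃ y ∈ U n, y ∉ insert x (K n) := fun n ↦
    not_subset.1 fun hsub ↦ h n (mem_of_superset (hU.mem n) hsub)
  choose y hyU hyK using hescape
  have hx : x ∉ range y := by
    rintro ⟨n, hn⟩
    exact hyK n (hn ▸ mem_insert x (K n))
  have hclosed : IsClosed (range y) :=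
    hcoh.isClosed_range_of_forall_notMem hK fun n hn ↦ hyK n (mem_insert_of_mem x hn)
  obtain ⟨n, -, hn⟩ := hU.toHasBasis.mem_iff.1 (hclosed.isOpen_compl.mem_nhds hx)
  exact hn (hyU n) (mem_range_self n)

theorem weaklyLocallyCompactSpace [T1Space X] [FirstCountableTopology X]
    (hcoh : IsCoherentWith (range K)) (hK : Monotone K) (hKc : ∀ n, IsCompact (K n)) :
    WeaklyLocallyCompactSpace X where
  exists_compact_mem_nhds x :=
    let ⟨n, hn⟩ := hcoh.exists_insert_mem_nhds hK x
    ⟨_, (hKc n).insert x, hn⟩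

end Topology.IsCoherentWith

theorem CompactExhaustion.isCoherentWith_range {X : Type*} [TopologicalSpace X]
    (K : CompactExhaustion X) : IsCoherentWith (range K) :=
  .of_nhds fun x ↦ ⟨K (K.find x + 1), mem_range_self _,
    mem_interior_iff_mem_nhds.1 (K.subset_interior_succ _ (K.mem_find x))⟩

theorem coPolish_of_locallyCompactSpace {X : Type*} [TopologicalSpace X] [T2Space X]
    [SecondCountableTopology X] [LocallyCompactSpace X] : CoPolish X := by
  let K := CompactExhaustion.choice X
  refine ⟨K, K.subset, K.isCompact, fun n ↦ ?_, K.iUnion_eq,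
    isCoherentWith_range_iff.1 K.isCoherentWith_range⟩
  have := isCompact_iff_compactSpace.1 (K.isCompact n)
  infer_instance

theorem coPolish_iff_locallyCompact (X : Type*) [TopologicalSpace X] [T2Space X]
    [SecondCountableTopology X] :
    CoPolish X ↔ LocallyCompactSpace X := by
  refine ⟨fun ⟨K, hK, hKc, _, _, hopen⟩ ↦ ?_, fun _ ↦ coPolish_of_locallyCompactSpace⟩
  have := (isCoherentWith_range_iff.2 hopen).weaklyLocallyCompactSpace hK hKc
  infer_instance
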